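/- Let G be a finite simple graph with clique partition π = {W₁,…,W_r}, let G^π be the clique-whiskered graph and W(G) the whisker graph of G. For a minimal vertex cover C of G^π, define C' = (C \ {w₁,…,w_r}) ∪ {y_{i,j} : wᵢ ∈ C and x_{i,j} ∈ Wᵢ \ C}, where y_{i,j} is the pendant attached to x_{i,j} in W(G). Then C' is a minimal vertex cover of W(G), and V(G) \ C = {x ∈ V(G) : the pendant of x lies in C'}. -/

import Mathlib

def cliqueWhisker {V ι : Type*} (G : SimpleGraph V) (p : V → ι) :
    SimpleGraph (V ⊕ ι) :=
  SimpleGraph.fromRel (fun a b =>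
    match a, b with
    | Sum.inl u, Sum.inl v => G.Adj u v
    | Sum.inl u, Sum.inr i => p u = i
    | _, _ => False)

def whiskerGraph {V : Type*} (G : SimpleGraph V) : SimpleGraph (V ⊕ V) :=
  SimpleGraph.fromRel (fun a b =>
    match a, b with
    | Sum.inl u, Sum.inl v => G.Adj u v
    | Sum.inl u, Sum.inr w => u = w
    | _, _ => False)

def IsVertexCover {V : Type*} (G : SimpleGraph V) (C : Set V) : Prop :=
  ∀ ⦃u v : V⦄, G.Adj u v → u ∈ C ∨ v ∈ C

def IsMinVertexCover {V : Type*} (G : SimpleGraph V) (C : Set V) : Prop :=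
  IsVertexCover G C ∧ ∀ D ⊆ C, IsVertexCover G D → D = C

def IsIndep {V : Type*} (G : SimpleGraph V) (A : Set V) : Prop :=
  ∀ u ∈ A, ∀ v ∈ A, ¬ G.Adj u v

/-!
A vertex cover is minimal exactly when each of its vertices has a neighbour outside it. Every
`x ∉ C` forces `w_{p x} ∈ C`, so its pendant `y_x` enters `C'` and `C'` covers `W(G)`. A vertex
`x ∈ C` has a neighbour outside `C`: either a vertex of `G`, which stays outside `C'`, or `w_{p x}`,
in which case `y_x ∉ C'` plays its role. Finally, `y_x ∈ C'` has the neighbour `x ∉ C'`.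
-/

open Sum

section VertexCover

variable {W : Type*} {H : SimpleGraph W} {C : Set W}

theorem isMinVertexCover_iff :
    IsMinVertexCover H C ↔ IsVertexCover H C ∧ ∀ x ∈ C, ∃ z, H.Adj x z ∧ z ∉ C := by
  refine ⟨fun ⟨hcov, hmin⟩ => ⟨hcov, fun x hx => ?_⟩, fun ⟨hcov, hnbr⟩ => ⟨hcov, ?_⟩⟩
  · by_contra! hall
    have hcov' : IsVertexCover H (C \ {x}) := by
      intro u v huv
      by_cases hu : u = x
      · subst hu; exact .inr ⟨hall v huv, huv.ne'⟩
      by_cases hv : v = x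
      · subst hv; exact .inl ⟨hall u huv.symm, huv.ne⟩
      exact (hcov huv).imp (fun h => ⟨h, hu⟩) (fun h => ⟨h, hv⟩)
    have hx' : x ∈ C \ {x} := by rw [hmin _ Set.sdiff_subset hcov']; exact hx
    exact hx'.2 rfl
  · intro D hDC hD
    refine hDC.antisymm fun x hx => ?_
    obtain ⟨z, hxz, hz⟩ := hnbr x hx
    exact (hD hxz).resolve_right fun hzD => hz (hDC hzD)

end VertexCover

section Adjacency

variable {V ι : Type*} {G : SimpleGraph V} {p : V → ι} {u v : V} {i : ι}

@[simp] theorem cliqueWhisker_adj_inl_inl :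
    (cliqueWhisker G p).Adj (inl u) (inl v) ↔ G.Adj u v := by
  simp [cliqueWhisker, G.adj_comm v u]; exact fun h => h.ne

@[simp] theorem cliqueWhisker_adj_inl_inr : (cliqueWhisker G p).Adj (inl v) (inr i) ↔ p v = i := by
  simp [cliqueWhisker]

@[simp] theorem whiskerGraph_adj_inl_inl :
    (whiskerGraph G).Adj (inl u) (inl v) ↔ G.Adj u v := by
  simp [whiskerGraph, G.adj_comm v u]; exact fun h => h.ne

@[simp] theorem whiskerGraph_adj_inl_inr : (whiskerGraph G).Adj (inl u) (inr v) ↔ u = v := by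
  simp [whiskerGraph]

@[simp] theorem whiskerGraph_adj_inr_inr : ¬ (whiskerGraph G).Adj (inr u) (inr v) := by
  simp [whiskerGraph]

end Adjacency

section WhiskerCover

variable {V ι : Type*} {G : SimpleGraph V} {p : V → ι} {C : Set (V ⊕ ι)}

/-- The paper's `C'`; in `V ⊕ V`, `inr v` is the pendant `y_v`. -/
def whiskerCover (p : V → ι) (C : Set (V ⊕ ι)) : Set (V ⊕ V) :=
  (inl '' {v : V | inl v ∈ C}) ∪ (inr '' {v : V | inr (p v) ∈ C ∧ inl v ∉ C})

@[simp] theorem inl_mem_whiskerCover {v : V} : inl v ∈ whiskerCover p C ↔ inl v ∈ C := by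
  simp [whiskerCover]

@[simp] theorem inr_mem_whiskerCover {v : V} :
    inr v ∈ whiskerCover p C ↔ inr (p v) ∈ C ∧ inl v ∉ C := by
  simp [whiskerCover]

theorem IsVertexCover.inr_mem_whiskerCover_iff (hC : IsVertexCover (cliqueWhisker G p) C)
    (v : V) : inr v ∈ whiskerCover p C ↔ inl v ∉ C := by
  refine inr_mem_whiskerCover.trans ⟨And.right, fun hv => ⟨?_, hv⟩⟩
  exact (hC (cliqueWhisker_adj_inl_inr.2 rfl)).resolve_left hv

theorem IsVertexCover.whiskerCover (hC : IsVertexCover (cliqueWhisker G p) C) :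
    IsVertexCover (whiskerGraph G) (whiskerCover p C) := by
  rintro (u | u) (v | v) huv
  · simpa using hC (cliqueWhisker_adj_inl_inl.2 (whiskerGraph_adj_inl_inl.1 huv))
  · obtain rfl := whiskerGraph_adj_inl_inr.1 huv
    rw [inl_mem_whiskerCover, hC.inr_mem_whiskerCover_iff]
    exact em _
  · obtain rfl := whiskerGraph_adj_inl_inr.1 huv.symm
    rw [inl_mem_whiskerCover, hC.inr_mem_whiskerCover_iff]
    exact (em _).symm
  · exact (whiskerGraph_adj_inr_inr huv).elim

theorem IsMinVertexCover.whiskerCover (hC : IsMinVertexCover (cliqueWhisker G p) C) :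
    IsMinVertexCover (whiskerGraph G) (whiskerCover p C) := by
  rw [isMinVertexCover_iff] at hC ⊢
  obtain ⟨hcov, hnbr⟩ := hC
  refine ⟨hcov.whiskerCover, ?_⟩
  rintro (v | v) hv
  · obtain ⟨(u | i), hvz, hz⟩ := hnbr _ (inl_mem_whiskerCover.1 hv)
    · exact ⟨inl u, whiskerGraph_adj_inl_inl.2 (cliqueWhisker_adj_inl_inl.1 hvz),
        by simpa using hz⟩
    · obtain rfl := cliqueWhisker_adj_inl_inr.1 hvz
      exact ⟨inr v, whiskerGraph_adj_inl_inr.2 rfl, fun h => hz (inr_mem_whiskerCover.1 h).1⟩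
  · exact ⟨inl v, (whiskerGraph_adj_inl_inr.2 rfl).symm,
      by simpa using (inr_mem_whiskerCover.1 hv).2⟩

end WhiskerCover

theorem stmt12_general {V : Type*} {r : ℕ} (G : SimpleGraph V) (p : V → Fin r)
    (C : Set (V ⊕ Fin r)) (hC : IsMinVertexCover (cliqueWhisker G p) C) :
    IsMinVertexCover (whiskerGraph G)
        ((Sum.inl '' {v : V | Sum.inl v ∈ C}) ∪
          (Sum.inr '' {v : V | Sum.inr (p v) ∈ C ∧ Sum.inl v ∉ C})) ∧
      {v : V | Sum.inl v ∉ C} =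
        {v : V | (Sum.inr v : V ⊕ V) ∈
          (Sum.inl '' {v : V | Sum.inl v ∈ C}) ∪
            (Sum.inr '' {v : V | Sum.inr (p v) ∈ C ∧ Sum.inl v ∉ C})} :=
  ⟨hC.whiskerCover, Set.ext fun v => (hC.1.inr_mem_whiskerCover_iff v).symm⟩

theorem stmt12 {V : Type*} [Fintype V] {r : ℕ} (G : SimpleGraph V) (p : V → Fin r)
    (hclique : ∀ u v : V, p u = p v → u ≠ v → G.Adj u v)
    (hsurj : Function.Surjective p)
    (C : Set (V ⊕ Fin r)) (hC : IsMinVertexCover (cliqueWhisker G p) C) :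
    IsMinVertexCover (whiskerGraph G)
        ((Sum.inl '' {v : V | Sum.inl v ∈ C}) ∪
          (Sum.inr '' {v : V | Sum.inr (p v) ∈ C ∧ Sum.inl v ∉ C})) ∧
      {v : V | Sum.inl v ∉ C} =
        {v : V | (Sum.inr v : V ⊕ V) ∈
          (Sum.inl '' {v : V | Sum.inl v ∈ C}) ∪
            (Sum.inr '' {v : V | Sum.inr (p v) ∈ C ∧ Sum.inl v ∉ C})} :=
  stmt12_general G p C hC
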